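/- arXiv:2503.05173 — 4 statements merged into one kernel-verified Lean document; each statement's English description precedes it below -/
import Mathlib

section
/- For all real numbers t > 0, integer z ≥ 1, and points a, b, c in a metric space with distance d, the inequality d(a,b)^z ≤ (1+t)^(z-1) · d(a,c)^z + (1+1/t)^(z-1) · d(c,b)^z holds. -/
/-!
After the triangle inequality, write `d(a,c) + d(c,b)` as the convex combination of
`(1+t) d(a,c)` and `(1+1/t) d(c,b)` with weights `1/(1+t)` and `t/(1+t)`, and apply convexity of
`x ↦ x ^ z` on `[0, ∞)`. All that matters is that `1+t` and `1+1/t` are Hölder conjugate.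
-/

lemma Real.holderConjugate_one_add_one_add_one_div {t : ℝ} (ht : 0 < t) :
    (1 + t).HolderConjugate (1 + 1 / t) := by
  rw [Real.holderConjugate_iff]
  refine ⟨by linarith, ?_⟩
  field_simp
  ring

/-- For `n = 0` the exponent `n - 1` truncates to `0` and the bound reads `1 ≤ 2`. -/
lemma add_pow_le_pow_mul_pow_add_pow_mul_pow {p q x y : ℝ} (hpq : p.HolderConjugate q)
    (hx : 0 ≤ x) (hy : 0 ≤ y) (n : ℕ) :
    (x + y) ^ n ≤ p ^ (n - 1) * x ^ n + q ^ (n - 1) * y ^ n := by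
  have hp := hpq.pos
  have hq := hpq.symm.pos
  cases n with
  | zero => norm_num
  | succ m =>
    have hweights : p⁻¹ + q⁻¹ = 1 := hpq.inv_add_inv_eq_one
    have hconvex := (convexOn_pow (m + 1)).2 (x := p * x) (y := q * y)
      (by simp only [Set.mem_Ici]; positivity) (by simp only [Set.mem_Ici]; positivity)
      (inv_nonneg.2 hp.le) (inv_nonneg.2 hq.le) hweights
    have hsplit : p⁻¹ • (p * x) + q⁻¹ • (q * y) = x + y := by
      simp only [smul_eq_mul, inv_mul_cancel_left₀ hp.ne', inv_mul_cancel_left₀ hq.ne']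
    rw [hsplit] at hconvex
    refine hconvex.trans_eq ?_
    simp only [smul_eq_mul, mul_pow, pow_succ, Nat.add_sub_cancel]
    field_simp

theorem stmt_0_general {X : Type*} [MetricSpace X] (t : ℝ) (ht : 0 < t) (z : ℕ)
    (a b c : X) :
    dist a b ^ z ≤ (1 + t) ^ (z - 1) * dist a c ^ z + (1 + 1 / t) ^ (z - 1) * dist c b ^ z :=
  calc dist a b ^ z ≤ (dist a c + dist c b) ^ z :=
        pow_le_pow_left₀ dist_nonneg (dist_triangle a c b) z
    _ ≤ _ := add_pow_le_pow_mul_pow_add_pow_mul_pow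
        (Real.holderConjugate_one_add_one_add_one_div ht) dist_nonneg dist_nonneg z

/-- Generalized triangle inequality for powered distances. -/
theorem stmt_0 {X : Type*} [MetricSpace X] (t : ℝ) (ht : 0 < t) (z : ℕ) (hz : 1 ≤ z)
    (a b c : X) :
    dist a b ^ z ≤ (1 + t) ^ (z - 1) * dist a c ^ z + (1 + 1 / t) ^ (z - 1) * dist c b ^ z :=
  stmt_0_general t ht z a b c
end

section
/- Let w_1, ..., w_n be reals with w_i ≥ 1 for all i, let S_i = w_1 + ... + w_i, let N = S_n, and let T ≥ 1 be a real parameter. Define prob_i = min(T · w_i / S_i, 1). Then ∑_{i=1}^n prob_i ≤ T · ln N + 1. -/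
/-!
Bound the first term by `1` and every later term `min (T w_i / S_i) 1` by `T w_i / S_i`.
Since `w_i = S_i - S_{i-1}`, the inequality `1 - x⁻¹ ≤ log x` at `x = S_i / S_{i-1}` gives
`w_i / S_i ≤ log S_i - log S_{i-1}`, which telescopes to `log S_n - log w_1 ≤ log N`.
-/

open Finset Real

lemma sub_div_le_log_sub_log {a b : ℝ} (ha : 0 < a) (hab : a ≤ b) :
    (b - a) / b ≤ log b - log a := by
  have hb : 0 < b := ha.trans_le hab
  have h := one_sub_inv_le_log_of_pos (div_pos hb ha)
  rw [log_div hb.ne' ha.ne', inv_div] at h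
  calc (b - a) / b = 1 - a / b := by field_simp
    _ ≤ log b - log a := h

lemma sum_sub_div_le_log_sub_log (S : ℕ → ℝ) {m n : ℕ} (hmn : m ≤ n)
    (hpos : ∀ i ∈ Ico m n, 0 < S i) (hmono : ∀ i ∈ Ico m n, S i ≤ S (i + 1)) :
    ∑ i ∈ Ico m n, (S (i + 1) - S i) / S (i + 1) ≤ log (S n) - log (S m) :=
  (sum_le_sum fun i hi => sub_div_le_log_sub_log (hpos i hi) (hmono i hi)).trans_eq
    (sum_Ico_sub (fun i => log (S i)) hmn)

lemma sum_Icc_one_eq_add_sum_Ico {M : Type*} [AddCommMonoid M] (f : ℕ → M) {n : ℕ}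
    (hn : 1 ≤ n) : ∑ i ∈ Icc 1 n, f i = f 1 + ∑ i ∈ Ico 1 n, f (i + 1) := by
  rw [← Ico_add_one_right_eq_Icc, sum_eq_sum_Ico_succ_bot (by omega), sum_Ico_add']

/-- Expected sample size bound for the streaming sampler. -/
theorem stmt_3 (n : ℕ) (w : ℕ → ℝ) (hw : ∀ i ∈ Finset.Icc 1 n, 1 ≤ w i)
    (T : ℝ) (hT : 1 ≤ T) :
    ∑ i ∈ Finset.Icc 1 n, min (T * w i / ∑ j ∈ Finset.Icc 1 i, w j) 1 ≤
      T * Real.log (∑ j ∈ Finset.Icc 1 n, w j) + 1 := by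
  rcases Nat.eq_zero_or_pos n with rfl | hn
  · simp
  set S : ℕ → ℝ := fun i => ∑ j ∈ Icc 1 i, w j
  have hS_succ (i : ℕ) : S (i + 1) = S i + w (i + 1) := sum_Icc_succ_top (by omega) w
  have hS_pos (i : ℕ) (hi : i ∈ Ico 1 n) : 0 < S i := by
    rw [mem_Ico] at hi
    exact sum_pos (fun j hj => zero_lt_one.trans_le (hw j (by grind))) (nonempty_Icc.mpr hi.1)
  have hS_mono (i : ℕ) (hi : i ∈ Ico 1 n) : S i ≤ S (i + 1) := by
    rw [hS_succ]
    linarith [hw (i + 1) (by grind)]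
  have hT0 : 0 ≤ T := zero_le_one.trans hT
  have h_tail : ∑ i ∈ Ico 1 n, min (T * w (i + 1) / S (i + 1)) 1 ≤ T * (log (S n) - log (S 1)) :=
    calc _ ≤ ∑ i ∈ Ico 1 n, T * ((S (i + 1) - S i) / S (i + 1)) := by
          refine sum_le_sum fun i _ => (min_le_left _ _).trans_eq ?_
          rw [hS_succ, add_sub_cancel_left, mul_div_assoc]
      _ ≤ T * (log (S n) - log (S 1)) := by
          rw [← mul_sum]
          exact mul_le_mul_of_nonneg_left (sum_sub_div_le_log_sub_log S hn hS_pos hS_mono) hT0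
  have hlog_S1 : 0 ≤ log (S 1) := log_nonneg (by simpa [S] using hw 1 (mem_Icc.mpr ⟨le_rfl, hn⟩))
  calc _ = min (T * w 1 / S 1) 1 + ∑ i ∈ Ico 1 n, min (T * w (i + 1) / S (i + 1)) 1 :=
        sum_Icc_one_eq_add_sum_Ico _ hn
    _ ≤ 1 + T * (log (S n) - log (S 1)) := add_le_add (min_le_right _ _) h_tail
    _ ≤ T * log (S n) + 1 := by linarith [mul_nonneg hT0 hlog_S1]
end

section
/- Consider 4n points on the real line, each labeled with a group in {1, 2}: group 1 consists of a zeros at position 0 and (2n - a) ones at position Δ; group 2 consists of n points at 0 and n points at Δ, where Δ > 0 and 0 ≤ a ≤ 2n. Consider any partition of the points into two clusters such that each cluster contains at least half of its points from group 2, together with any choice of 2 centers in R, with cost equal to the sum over all points of the distance to the center of their cluster. If a = n, the optimal cost of such a fair 2-clustering is 0; if a = n + 1, every fair 2-clustering has cost at least Δ. -/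
/-!
Splitting the points by position is a fair clustering of cost zero when `a = n`. When
`a = n + 1`, a clustering of cost below `Δ` cannot put points at both positions into one
cluster, so the points at `0` form a union of clusters; summing the fairness inequality over
these clusters gives `2n + 1 ≤ 2n`.
-/

open Finset

section
variable {ι : Type*} [Fintype ι]

theorem card_filter_eq_card_filter_false_add_card_filter_true (g : ι → Bool) (p : ι → Prop)
    [DecidablePred p] :
    #{i | p i} = #{i | g i = false ∧ p i} + #{i | g i = true ∧ p i} := by
  simp only [card_filter, ← sum_add_distrib]
  refine sum_congr rfl fun i _ => ?_
  cases g i <;> simp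

theorem abs_sub_le_sum_abs_sub (p c : ι → ℝ) {i j : ι} (hc : c i = c j) :
    |p i - p j| ≤ ∑ k, |p k - c k| := by
  classical
  by_cases hij : i = j
  · subst hij
    simpa using sum_nonneg fun k _ => abs_nonneg (p k - c k)
  calc |p i - p j| ≤ |p i - c i| + |p j - c j| := by
        rw [hc, abs_sub_comm (p j)]; exact abs_sub_le _ _ _
    _ = ∑ k ∈ {i, j}, |p k - c k| := by rw [sum_pair hij]
    _ ≤ ∑ k, |p k - c k| := sum_le_univ_sum_of_nonneg fun k => abs_nonneg _

theorem card_le_two_mul_card_filter_of_fibers {β : Type*} [DecidableEq β] (f : ι → β)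
    (G : ι → Prop) [DecidablePred G] (S : Finset ι) (hS : ∀ i ∈ S, ∀ j, f j = f i → j ∈ S)
    (hfibers : ∀ b, #{i | f i = b} ≤ 2 * #{i | f i = b ∧ G i}) :
    #S ≤ 2 * #{i ∈ S | G i} := by
  rw [card_eq_sum_card_image f S,
    card_eq_sum_card_fiberwise (f := f) (t := S.image f) fun i hi =>
      mem_image_of_mem f (mem_filter.mp hi).1, mul_sum]
  refine sum_le_sum fun b hb => ?_
  obtain ⟨i, hi, rfl⟩ := mem_image.mp hb
  have hsat : ∀ j, f j = f i → j ∈ S := hS i hi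
  calc #{j ∈ S | f j = f i} = #{j | f j = f i} := by
        congr 1; ext j; simpa using hsat j
    _ ≤ 2 * #{j | f j = f i ∧ G j} := hfibers (f i)
    _ = 2 * #{j ∈ {j ∈ S | G j} | f j = f i} := by
        congr 2; ext j; simp only [mem_filter, mem_univ, true_and]; grind

def IsFair (f g : ι → Bool) : Prop :=
  ∀ b, #{i | f i = b} ≤ 2 * #{i | f i = b ∧ g i = true}

theorem exists_isFair_sum_abs_sub_eq_zero {x y : ℝ} (hxy : x ≠ y) (pos : ι → ℝ) (g : ι → Bool)
    (hpos : ∀ i, pos i = x ∨ pos i = y)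
    (hx : #{i | pos i = x} ≤ 2 * #{i | g i = true ∧ pos i = x})
    (hy : #{i | pos i = y} ≤ 2 * #{i | g i = true ∧ pos i = y}) :
    ∃ (f : ι → Bool) (c₁ c₂ : ℝ),
      IsFair f g ∧ ∑ i, |pos i - (if f i then c₁ else c₂)| = 0 := by
  have hcluster : ∀ b i, decide (pos i = x) = b ↔ pos i = if b then x else y := by
    intro b i
    rcases hpos i with h | h <;> cases b <;> simp [h, hxy, hxy.symm]
  refine ⟨fun i => decide (pos i = x), x, y, fun b => ?_, sum_eq_zero fun i _ => ?_⟩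
  · simp only [hcluster b]
    cases b <;> simpa [and_comm]
  · rcases hpos i with h | h <;> simp [h, hxy.symm]

theorem le_sum_abs_sub_of_isFair {x y : ℝ} (pos : ι → ℝ) (g : ι → Bool)
    (hpos : ∀ i, pos i = x ∨ pos i = y)
    (hunbalanced : 2 * #{i | g i = true ∧ pos i = x} < #{i | pos i = x})
    (f : ι → Bool) (c₁ c₂ : ℝ) (hf : IsFair f g) :
    |x - y| ≤ ∑ i, |pos i - (if f i then c₁ else c₂)| := by
  by_contra! hcost
  have hpure : ∀ i j, f i = f j → pos i = pos j := by
    intro i j hij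
    by_contra hne
    have hdist : |pos i - pos j| = |x - y| := by
      rcases hpos i with hi | hi <;> rcases hpos j with hj | hj <;> simp_all [abs_sub_comm]
    exact hcost.not_ge (hdist ▸ abs_sub_le_sum_abs_sub pos _ (by simp only [hij]))
  have hbalanced := card_le_two_mul_card_filter_of_fibers f (fun i => g i = true)
    {i | pos i = x} (by simp only [mem_filter, mem_univ, true_and]; grind) hf
  rw [filter_filter] at hbalanced
  simp only [and_comm] at hbalanced
  omega

end

open Classical in
theorem stmt_8_general {ι : Type*} [Fintype ι] (n a : ℕ) (Δ : ℝ) (hΔ : 0 < Δ)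
    (pos : ι → ℝ) (isG2 : ι → Bool)
    (hpos : ∀ i, pos i = 0 ∨ pos i = Δ)
    (h10 : (Finset.univ.filter fun i => isG2 i = false ∧ pos i = 0).card = a)
    (h1Δ : (Finset.univ.filter fun i => isG2 i = false ∧ pos i = Δ).card = 2 * n - a)
    (h20 : (Finset.univ.filter fun i => isG2 i = true ∧ pos i = 0).card = n)
    (h2Δ : (Finset.univ.filter fun i => isG2 i = true ∧ pos i = Δ).card = n) :
    (a = n → ∃ (f : ι → Bool) (c₁ c₂ : ℝ),
        (∀ b : Bool, (Finset.univ.filter fun i => f i = b).card ≤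
          2 * (Finset.univ.filter fun i => f i = b ∧ isG2 i = true).card) ∧
        ∑ i, |pos i - (if f i then c₁ else c₂)| = 0) ∧
    (a = n + 1 → ∀ (f : ι → Bool) (c₁ c₂ : ℝ),
        (∀ b : Bool, (Finset.univ.filter fun i => f i = b).card ≤
          2 * (Finset.univ.filter fun i => f i = b ∧ isG2 i = true).card) →
        Δ ≤ ∑ i, |pos i - (if f i then c₁ else c₂)|) := by
  have hsplit := card_filter_eq_card_filter_false_add_card_filter_true isG2
  refine ⟨fun han => ?_, fun han f c₁ c₂ hfair => ?_⟩
  · exact exists_isFair_sum_abs_sub_eq_zero hΔ.ne pos isG2 hpos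
      (by rw [hsplit (pos · = 0)]; omega) (by rw [hsplit (pos · = Δ)]; omega)
  · have hcost := le_sum_abs_sub_of_isFair pos isG2 hpos
      (by rw [hsplit (pos · = 0)]; omega) f c₁ c₂ hfair
    rwa [zero_sub, abs_neg, abs_of_pos hΔ] at hcost

open Classical in
/-- Combinatorial core of the sliding-window lower bound for fair 2-median. -/
theorem stmt_8 {ι : Type*} [Fintype ι] (n a : ℕ) (Δ : ℝ) (hΔ : 0 < Δ) (ha : a ≤ 2 * n)
    (pos : ι → ℝ) (isG2 : ι → Bool)
    (hpos : ∀ i, pos i = 0 ∨ pos i = Δ)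
    (h10 : (Finset.univ.filter fun i => isG2 i = false ∧ pos i = 0).card = a)
    (h1Δ : (Finset.univ.filter fun i => isG2 i = false ∧ pos i = Δ).card = 2 * n - a)
    (h20 : (Finset.univ.filter fun i => isG2 i = true ∧ pos i = 0).card = n)
    (h2Δ : (Finset.univ.filter fun i => isG2 i = true ∧ pos i = Δ).card = n) :
    (a = n → ∃ (f : ι → Bool) (c₁ c₂ : ℝ),
        (∀ b : Bool, (Finset.univ.filter fun i => f i = b).card ≤
          2 * (Finset.univ.filter fun i => f i = b ∧ isG2 i = true).card) ∧
        ∑ i, |pos i - (if f i then c₁ else c₂)| = 0) ∧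
    (a = n + 1 → ∀ (f : ι → Bool) (c₁ c₂ : ℝ),
        (∀ b : Bool, (Finset.univ.filter fun i => f i = b).card ≤
          2 * (Finset.univ.filter fun i => f i = b ∧ isG2 i = true).card) →
        Δ ≤ ∑ i, |pos i - (if f i then c₁ else c₂)|) :=
  stmt_8_general n a Δ hΔ pos isG2 hpos h10 h1Δ h20 h2Δ
end

section
/- Let P ⊆ R^d be a finite weighted set, C a finite center set, Γ an assignment constraint with Γ(C) = w_P(P), and suppose every point of P and every center of C lies in a set of diameter at most R. Let Γ' be another assignment constraint on C with Γ'(C) = w_P(P). Then |cost(P, C, Γ) − cost(P, C, Γ')| ≤ R^z · ∑_{c∈C} |Γ(c) − Γ'(c)|. -/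
/-!
Compose any transport plan `σ` for `Γ` with a stochastic kernel `K` on the centres that carries
`Γ` to `Γ'`: `K` keeps `min (Γ c) (Γ' c)` at `c` and spreads the excess `(Γ c - Γ' c)⁺` over the
deficits `(Γ c - Γ' c)⁻` in proportion. The plan `σ K` is feasible for `Γ'`. All costs
`dist ^ z` lie in `[0, R ^ z]`, so mass leaving its centre raises the cost by at most `R ^ z` per
unit, and the mass `∑ c, Γ c * (1 - K c c)` that leaves is at most `∑ c, (Γ c - Γ' c)⁺`.
Exchanging `Γ` and `Γ'` gives the bound on the absolute value.
-/

open Finset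

/-- Minimum constrained assignment cost. -/
noncomputable def assignCost {ι κ : Type*} [Fintype ι] [Fintype κ] {d : ℕ} (z : ℕ)
    (pts : ι → EuclideanSpace ℝ (Fin d)) (ctr : κ → EuclideanSpace ℝ (Fin d))
    (w : ι → ℝ) (Γ : κ → ℝ) : ℝ :=
  sInf { x : ℝ | ∃ σ : ι → κ → ℝ, (∀ p c, 0 ≤ σ p c) ∧ (∀ p, ∑ c, σ p c = w p) ∧
    (∀ c, ∑ p, σ p c = Γ c) ∧ x = ∑ p, ∑ c, σ p c * dist (pts p) (ctr c) ^ z }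

theorem eq_zero_of_nonneg_of_sum_eq_zero {α : Type*} [Fintype α] {f : α → ℝ}
    (hf : ∀ a, 0 ≤ f a) (h : ∑ a, f a = 0) (a : α) : f a = 0 :=
  (sum_eq_zero_iff_of_nonneg fun b _ => hf b).1 h a (mem_univ a)

section StochasticKernel

variable {κ : Type*} [Fintype κ]

theorem sum_mul_le_add_mul_one_sub {k g : κ → ℝ} {B : ℝ}
    (hk : ∀ c, 0 ≤ k c) (hk1 : ∑ c, k c = 1) (hg : ∀ c, 0 ≤ g c) (hgB : ∀ c, g c ≤ B)
    (c : κ) : ∑ c', k c' * g c' ≤ g c + B * (1 - k c) := by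
  classical
  have hkc : k c ≤ 1 := hk1 ▸ single_le_sum (fun i _ => hk i) (mem_univ c)
  rw [← hk1, ← add_sum_erase _ _ (mem_univ c), ← add_sum_erase _ _ (mem_univ c),
    add_sub_cancel_left, mul_sum]
  exact add_le_add (mul_le_of_le_one_left (hg c) hkc)
    (sum_le_sum fun c' _ => by rw [mul_comm B]; exact mul_le_mul_of_nonneg_left (hgB c') (hk c'))

section Reroute

variable [DecidableEq κ]

/-- Keeps the mass `Γ c - e c` at `c` and spreads the excess `e c` over the deficits `f` in
proportion. The junk divisions by zero are harmless under `0 ≤ e ≤ Γ` and `∑ e = ∑ f`: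
`Γ c = 0` forces `e c = 0`, and `∑ f = 0` forces `e = 0`. -/
noncomputable def rerouteKernel (Γ e f : κ → ℝ) (c c' : κ) : ℝ :=
  (if c = c' then 1 - e c / Γ c else 0) + e c / Γ c * (f c' / ∑ b, f b)

variable {Γ e f : κ → ℝ}

theorem rerouteKernel_nonneg (he : ∀ c, 0 ≤ e c) (heΓ : ∀ c, e c ≤ Γ c) (hf : ∀ c, 0 ≤ f c)
    (c c' : κ) : 0 ≤ rerouteKernel Γ e f c c' := by
  have hr : 0 ≤ e c / Γ c * (f c' / ∑ b, f b) :=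
    mul_nonneg (div_nonneg (he c) ((he c).trans (heΓ c)))
      (div_nonneg (hf c') (sum_nonneg fun b _ => hf b))
  have hr1 : e c / Γ c ≤ 1 := div_le_one_of_le₀ (heΓ c) ((he c).trans (heΓ c))
  unfold rerouteKernel
  split_ifs <;> linarith

theorem sum_rerouteKernel (he : ∀ c, 0 ≤ e c) (hef : ∑ c, e c = ∑ c, f c) (c : κ) :
    ∑ c', rerouteKernel Γ e f c c' = 1 := by
  have hr : e c / Γ c * (∑ c', f c') / ∑ c', f c' = e c / Γ c :=
    mul_div_cancel_of_imp fun h => by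
      rw [eq_zero_of_nonneg_of_sum_eq_zero he (hef.trans h) c, zero_div]
  simp only [rerouteKernel, sum_add_distrib, sum_ite_eq, mem_univ, if_true, ← mul_sum,
    ← sum_div, ← mul_div_assoc, hr, sub_add_cancel]

theorem sum_mul_rerouteKernel (he : ∀ c, 0 ≤ e c) (heΓ : ∀ c, e c ≤ Γ c) (hf : ∀ c, 0 ≤ f c)
    (hef : ∑ c, e c = ∑ c, f c) (c' : κ) :
    ∑ c, Γ c * rerouteKernel Γ e f c c' = Γ c' - e c' + f c' := by
  have hΓe c : Γ c * (e c / Γ c) = e c :=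
    mul_div_cancel_of_imp' fun h => le_antisymm (h ▸ heΓ c) (he c)
  have hf' : (∑ c, f c) * (f c' / ∑ c, f c) = f c' :=
    mul_div_cancel_of_imp' fun h => eq_zero_of_nonneg_of_sum_eq_zero hf h c'
  simp only [rerouteKernel, mul_add, mul_ite, mul_zero, sum_add_distrib, sum_ite_eq', mem_univ,
    if_true, mul_sub, mul_one, hΓe, ← mul_assoc, ← sum_mul, hef, hf']

theorem sum_mul_one_sub_rerouteKernel_le (he : ∀ c, 0 ≤ e c) (heΓ : ∀ c, e c ≤ Γ c)
    (hf : ∀ c, 0 ≤ f c) : ∑ c, Γ c * (1 - rerouteKernel Γ e f c c) ≤ ∑ c, e c := by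
  refine sum_le_sum fun c _ => ?_
  have hΓe : Γ c * (e c / Γ c) = e c :=
    mul_div_cancel_of_imp' fun h => le_antisymm (h ▸ heΓ c) (he c)
  have hq : 0 ≤ f c / ∑ b, f b := div_nonneg (hf c) (sum_nonneg fun b _ => hf b)
  calc Γ c * (1 - rerouteKernel Γ e f c c)
      = Γ c * (e c / Γ c) * (1 - f c / ∑ b, f b) := by simp only [rerouteKernel, if_true]; ring
    _ ≤ e c := by rw [hΓe]; nlinarith [he c]

end Reroute

theorem exists_stochastic_kernel {Γ Γ' : κ → ℝ} (hΓ : ∀ c, 0 ≤ Γ c) (hΓ' : ∀ c, 0 ≤ Γ' c)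
    (hsum : ∑ c, Γ c = ∑ c, Γ' c) :
    ∃ K : κ → κ → ℝ, (∀ c c', 0 ≤ K c c') ∧ (∀ c, ∑ c', K c c' = 1) ∧
      (∀ c', ∑ c, Γ c * K c c' = Γ' c') ∧
      ∑ c, Γ c * (1 - K c c) ≤ ∑ c, |Γ c - Γ' c| := by
  classical
  set e : κ → ℝ := fun c => (Γ c - Γ' c)⁺
  set f : κ → ℝ := fun c => (Γ c - Γ' c)⁻
  have he c : 0 ≤ e c := posPart_nonneg _
  have hf c : 0 ≤ f c := negPart_nonneg _
  have heΓ c : e c ≤ Γ c := sup_le (by linarith [hΓ' c]) (hΓ c)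
  have hef : ∑ c, e c = ∑ c, f c := by
    rw [← sub_eq_zero, ← sum_sub_distrib]
    simp only [e, f, posPart_sub_negPart, sum_sub_distrib, hsum, sub_self]
  refine ⟨rerouteKernel Γ e f, rerouteKernel_nonneg he heΓ hf, sum_rerouteKernel he hef,
    fun c' => ?_, (sum_mul_one_sub_rerouteKernel_le he heΓ hf).trans ?_⟩
  · rw [sum_mul_rerouteKernel he heΓ hf hef, sub_add, posPart_sub_negPart, sub_sub_cancel]
  · exact sum_le_sum fun c _ =>
      (le_add_of_nonneg_right (negPart_nonneg _)).trans_eq (posPart_add_negPart _)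

end StochasticKernel

section Transport

variable {ι κ : Type*} [Fintype ι] [Fintype κ]

theorem sum_sum_mul_kernel_mul_le {σ : ι → κ → ℝ} {K : κ → κ → ℝ}
    {D : ι → κ → ℝ} {B : ℝ} (hσ : ∀ p c, 0 ≤ σ p c) (hK : ∀ c c', 0 ≤ K c c')
    (hK1 : ∀ c, ∑ c', K c c' = 1) (hD0 : ∀ p c, 0 ≤ D p c) (hDB : ∀ p c, D p c ≤ B) :
    ∑ p, ∑ c', (∑ c, σ p c * K c c') * D p c' ≤
      ∑ p, ∑ c, σ p c * D p c + B * ∑ c, (∑ p, σ p c) * (1 - K c c) := by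
  calc ∑ p, ∑ c', (∑ c, σ p c * K c c') * D p c'
      = ∑ p, ∑ c, σ p c * ∑ c', K c c' * D p c' := by
        simp only [sum_mul, mul_sum, mul_assoc]; exact sum_congr rfl fun p _ => sum_comm
    _ ≤ ∑ p, ∑ c, σ p c * (D p c + B * (1 - K c c)) := by
        gcongr with p _ c _
        · exact hσ p c
        · exact sum_mul_le_add_mul_one_sub (hK c) (hK1 c) (hD0 p) (hDB p) c
    _ = ∑ p, ∑ c, σ p c * D p c + B * ∑ c, (∑ p, σ p c) * (1 - K c c) := by
        simp only [mul_add, sum_add_distrib, mul_sum, sum_mul]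
        congr 1
        rw [sum_comm]
        exact sum_congr rfl fun c _ => sum_congr rfl fun p _ => mul_left_comm _ _ _

def planCosts (D : ι → κ → ℝ) (w : ι → ℝ) (Γ : κ → ℝ) : Set ℝ :=
  { x : ℝ | ∃ σ : ι → κ → ℝ, (∀ p c, 0 ≤ σ p c) ∧ (∀ p, ∑ c, σ p c = w p) ∧
    (∀ c, ∑ p, σ p c = Γ c) ∧ x = ∑ p, ∑ c, σ p c * D p c }

noncomputable def transportCost (D : ι → κ → ℝ) (w : ι → ℝ) (Γ : κ → ℝ) : ℝ :=
  sInf (planCosts D w Γ)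

theorem assignCost_eq_transportCost {d : ℕ} (z : ℕ) (pts : ι → EuclideanSpace ℝ (Fin d))
    (ctr : κ → EuclideanSpace ℝ (Fin d)) (w : ι → ℝ) (Γ : κ → ℝ) :
    assignCost z pts ctr w Γ = transportCost (fun p c => dist (pts p) (ctr c) ^ z) w Γ :=
  rfl

variable {D : ι → κ → ℝ} {w : ι → ℝ} {Γ Γ' : κ → ℝ}

theorem planCosts_nonempty (hw : ∀ p, 0 ≤ w p) (hΓ : ∀ c, 0 ≤ Γ c)
    (hsum : ∑ c, Γ c = ∑ p, w p) : (planCosts D w Γ).Nonempty := by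
  have hrow p : w p * (∑ q, w q) / ∑ q, w q = w p :=
    mul_div_cancel_of_imp fun h => eq_zero_of_nonneg_of_sum_eq_zero hw h p
  have hcol c : (∑ q, w q) * Γ c / ∑ q, w q = Γ c :=
    mul_div_cancel_left_of_imp fun h => eq_zero_of_nonneg_of_sum_eq_zero hΓ (hsum.trans h) c
  refine ⟨_, fun p c => w p * Γ c / ∑ q, w q, fun p c => ?_, fun p => ?_, fun c => ?_, rfl⟩
  · exact div_nonneg (mul_nonneg (hw p) (hΓ c)) (sum_nonneg fun q _ => hw q)
  · rw [← sum_div, ← mul_sum, hsum, hrow]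
  · rw [← sum_div, ← sum_mul, hcol]

theorem planCosts_bddBelow (hD0 : ∀ p c, 0 ≤ D p c) : BddBelow (planCosts D w Γ) := by
  refine ⟨0, ?_⟩
  rintro _ ⟨σ, hσ, -, -, rfl⟩
  exact sum_nonneg fun p _ => sum_nonneg fun c _ => mul_nonneg (hσ p c) (hD0 p c)

theorem transportCost_le_add {B : ℝ} (hD0 : ∀ p c, 0 ≤ D p c) (hDB : ∀ p c, D p c ≤ B)
    (hB : 0 ≤ B) (hw : ∀ p, 0 ≤ w p) (hΓ : ∀ c, 0 ≤ Γ c) (hΓ' : ∀ c, 0 ≤ Γ' c)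
    (hsum : ∑ c, Γ c = ∑ p, w p) (hsum' : ∑ c, Γ' c = ∑ p, w p) :
    transportCost D w Γ' ≤ transportCost D w Γ + B * ∑ c, |Γ c - Γ' c| := by
  obtain ⟨K, hK, hK1, hΓK, hdefect⟩ := exists_stochastic_kernel hΓ hΓ' (hsum.trans hsum'.symm)
  rw [← sub_le_iff_le_add]
  refine le_csInf (planCosts_nonempty hw hΓ hsum) ?_
  rintro _ ⟨σ, hσ, hrow, hcol, rfl⟩
  rw [sub_le_iff_le_add]
  have hplan : ∑ p, ∑ c', (∑ c, σ p c * K c c') * D p c' ∈ planCosts D w Γ' := by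
    refine ⟨fun p c' => ∑ c, σ p c * K c c', fun p c' => ?_, fun p => ?_, fun c' => ?_, rfl⟩
    · exact sum_nonneg fun c _ => mul_nonneg (hσ p c) (hK c c')
    · rw [sum_comm]
      simp only [← mul_sum, hK1, mul_one, hrow]
    · rw [sum_comm]
      simp only [← sum_mul, hcol, hΓK]
  calc transportCost D w Γ'
      ≤ ∑ p, ∑ c', (∑ c, σ p c * K c c') * D p c' := csInf_le (planCosts_bddBelow hD0) hplan
    _ ≤ ∑ p, ∑ c, σ p c * D p c + B * ∑ c, (∑ p, σ p c) * (1 - K c c) :=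
        sum_sum_mul_kernel_mul_le hσ hK hK1 hD0 hDB
    _ ≤ ∑ p, ∑ c, σ p c * D p c + B * ∑ c, |Γ c - Γ' c| := by
        simp only [hcol]
        gcongr

theorem abs_transportCost_sub_le {B : ℝ} (hD0 : ∀ p c, 0 ≤ D p c) (hDB : ∀ p c, D p c ≤ B)
    (hw : ∀ p, 0 ≤ w p) (hΓ : ∀ c, 0 ≤ Γ c) (hΓ' : ∀ c, 0 ≤ Γ' c)
    (hsum : ∑ c, Γ c = ∑ p, w p) (hsum' : ∑ c, Γ' c = ∑ p, w p) :
    |transportCost D w Γ - transportCost D w Γ'| ≤ B * ∑ c, |Γ c - Γ' c| := by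
  rcases isEmpty_or_nonempty (ι × κ) with h | ⟨p, c⟩
  · have hΓΓ' : Γ = Γ' := by
      funext c
      rcases isEmpty_prod.1 h with hι | hκ
      · have hw0 : ∑ p, w p = 0 := by simp
        rw [eq_zero_of_nonneg_of_sum_eq_zero hΓ (hsum.trans hw0),
          eq_zero_of_nonneg_of_sum_eq_zero hΓ' (hsum'.trans hw0)]
      · exact isEmptyElim c
    simp [hΓΓ']
  · have hB : 0 ≤ B := (hD0 p c).trans (hDB p c)
    have hle := transportCost_le_add hD0 hDB hB hw hΓ hΓ' hsum hsum'
    have hle' := transportCost_le_add hD0 hDB hB hw hΓ' hΓ hsum' hsum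
    simp only [abs_sub_comm (Γ' _)] at hle'
    exact abs_sub_le_iff.2 ⟨by linarith, by linarith⟩

end Transport

theorem stmt_12_general {ι κ : Type*} [Fintype ι] [Fintype κ] (d z : ℕ)
    (pts : ι → EuclideanSpace ℝ (Fin d)) (ctr : κ → EuclideanSpace ℝ (Fin d))
    (R : ℝ)
    (hR : ∀ x ∈ Set.range pts ∪ Set.range ctr, ∀ y ∈ Set.range pts ∪ Set.range ctr,
      dist x y ≤ R)
    (w : ι → ℝ) (hw : ∀ p, 0 ≤ w p)
    (Γ Γ' : κ → ℝ) (hΓ : ∀ c, 0 ≤ Γ c) (hΓ' : ∀ c, 0 ≤ Γ' c)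
    (hsum : ∑ c, Γ c = ∑ p, w p) (hsum' : ∑ c, Γ' c = ∑ p, w p) :
    |assignCost z pts ctr w Γ - assignCost z pts ctr w Γ'| ≤
      R ^ z * ∑ c, |Γ c - Γ' c| := by
  have hdist p c : dist (pts p) (ctr c) ≤ R :=
    hR _ (Or.inl ⟨p, rfl⟩) _ (Or.inr ⟨c, rfl⟩)
  rw [assignCost_eq_transportCost, assignCost_eq_transportCost]
  exact abs_transportCost_sub_le (fun p c => pow_nonneg dist_nonneg z)
    (fun p c => pow_le_pow_left₀ dist_nonneg (hdist p c) z) hw hΓ hΓ' hsum hsum'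

/-- Lipschitz continuity of the constrained cost in the assignment constraint. -/
theorem stmt_12 {ι κ : Type*} [Fintype ι] [Fintype κ] (d z : ℕ) (hz : 1 ≤ z)
    (pts : ι → EuclideanSpace ℝ (Fin d)) (ctr : κ → EuclideanSpace ℝ (Fin d))
    (R : ℝ)
    (hR : ∀ x ∈ Set.range pts ∪ Set.range ctr, ∀ y ∈ Set.range pts ∪ Set.range ctr,
      dist x y ≤ R)
    (w : ι → ℝ) (hw : ∀ p, 0 ≤ w p)
    (Γ Γ' : κ → ℝ) (hΓ : ∀ c, 0 ≤ Γ c) (hΓ' : ∀ c, 0 ≤ Γ' c)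
    (hsum : ∑ c, Γ c = ∑ p, w p) (hsum' : ∑ c, Γ' c = ∑ p, w p) :
    |assignCost z pts ctr w Γ - assignCost z pts ctr w Γ'| ≤
      R ^ z * ∑ c, |Γ c - Γ' c| :=
  stmt_12_general d z pts ctr R hR w hw Γ Γ' hΓ hΓ' hsum hsum'
end
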